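/- For every family of languages K(φ,U) = { (b a^{φ(k)})^k : k ∈ U }, where φ : ℕ⁺ → ℕ⁺ satisfies φ(n) → ∞ and U ⊆ ℕ is infinite, the language K(φ,U) is not indexed. More precisely: assuming the Shrinking Lemma for indexed languages, K(φ,U) fails its conclusion for m = 1. -/

import Mathlib

/-- The two-letter alphabet `{a, b}`. -/
inductive AB : Type
  | a : AB
  | b : AB
deriving DecidableEq

/-- The language `K(φ, U) = { (b a^{φ(k)})^k : k ∈ U }`. -/
def Klang (φ : ℕ → ℕ) (U : Set ℕ) : Set (List AB) :=
  { w | ∃ k ∈ U, w = (List.replicate k (AB.b :: List.replicate (φ k) AB.a)).flatten }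

/-- The conclusion of the Shrinking Lemma for indexed languages, for `m = 1`:
there is `k > 0` such that every `w ∈ L` with `|w| ≥ k` factors as a product of
`r` nonempty factors with `1 < r ≤ k`, such that each factor is contained in a
proper subproduct (obtained by deleting some of the factors, keeping their
order) which again lies in `L`. -/
def ShrinkOne (L : Set (List AB)) : Prop :=
  ∃ k : ℕ, 0 < k ∧ ∀ w ∈ L, k ≤ w.length →
    ∃ ws : List (List AB),
      w = ws.flatten ∧ 1 < ws.length ∧ ws.length ≤ k ∧
      (∀ wi ∈ ws, wi ≠ []) ∧
      ∀ i < ws.length, ∃ S : Finset ℕ,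
        i ∈ S ∧ S ⊆ Finset.range ws.length ∧ S ≠ Finset.range ws.length ∧
        (((List.range ws.length).filter (fun j => decide (j ∈ S))).map
          (fun j => ws.getD j [])).flatten ∈ L

/-!
Choose `n ∈ U` with `φ n` larger than every `φ j` for `j ≤ k`, and least in `U` with this value
of `φ`; then `n > k`. In a factorization of `w = (b a^{φ n})^n` into at most `k < n` factors some
factor contains two `b`'s, hence an infix `b a^{φ n} b`, so every word `(b a^{φ m})^m` containing
it has `φ m = φ n`. A proper subproduct containing that factor is strictly shorter than `w`, so
`m < n`, contradicting the choice of `n`.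
-/

open Filter

section Subproduct

variable {α : Type*}

def subproduct (ws : List (List α)) (S : Finset ℕ) : List α :=
  (((List.range ws.length).filter (fun j => decide (j ∈ S))).map (fun j => ws.getD j [])).flatten

theorem subproduct_range (ws : List (List α)) :
    subproduct ws (Finset.range ws.length) = ws.flatten := by
  rw [subproduct, List.filter_eq_self.mpr (by simp)]
  congr 1
  apply List.ext_getElem (by simp)
  intro i _ h
  simp [List.getElem?_eq_getElem h]

theorem length_subproduct {ws : List (List α)} {S : Finset ℕ}
    (hS : S ⊆ Finset.range ws.length) :
    (subproduct ws S).length = ∑ j ∈ S, (ws.getD j []).length := by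
  rw [subproduct, List.length_flatten, List.map_map,
    ← List.sum_toFinset _ ((List.nodup_range).filter _), List.toFinset_filter, List.toFinset_range]
  congr 1
  ext j
  simpa using fun h => Finset.mem_range.mp (hS h)

theorem length_subproduct_lt {ws : List (List α)} {S : Finset ℕ}
    (hS : S ⊆ Finset.range ws.length) {j : ℕ} (hj : j < ws.length) (hjS : j ∉ S)
    (hne : ws[j] ≠ []) : (subproduct ws S).length < ws.flatten.length := by
  rw [← subproduct_range, length_subproduct hS, length_subproduct subset_rfl]
  refine Finset.sum_lt_sum_of_subset hS (Finset.mem_range.mpr hj) hjS ?_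
    (fun _ _ _ => Nat.zero_le _)
  rw [List.getD_eq_getElem _ _ hj]
  exact List.length_pos_iff.mpr hne

theorem infix_subproduct {ws : List (List α)} {S : Finset ℕ} {i : ℕ} (hi : i < ws.length)
    (hiS : i ∈ S) : ws[i] <:+: subproduct ws S := by
  apply List.infix_of_mem_flatten
  rw [← List.getD_eq_getElem _ [] hi]
  exact List.mem_map_of_mem (List.mem_filter.mpr ⟨List.mem_range.mpr hi, by simpa using hiS⟩)

end Subproduct

theorem exists_two_le_count_of_length_lt {α : Type*} [BEq α] {a : α} {ws : List (List α)}
    (h : ws.length < ws.flatten.count a) : ∃ w ∈ ws, 2 ≤ w.count a := by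
  by_contra! hlt
  have := List.sum_le_card_nsmul (ws.map (List.count a)) 1 (by simpa [Nat.lt_succ_iff] using hlt)
  simp only [← List.count_flatten, List.length_map, smul_eq_mul, mul_one] at this
  omega

theorem exists_append_cons_append_cons_of_two_le_count {α : Type*} [DecidableEq α] {a : α}
    {u : List α} (h : 2 ≤ u.count a) : ∃ x y z, u = x ++ a :: (y ++ a :: z) ∧ a ∉ y := by
  obtain ⟨x, t, rfl, hx⟩ :=
    List.eq_append_cons_of_mem (List.count_pos_iff.mp (by omega : 0 < u.count a))
  have : a ∈ t := List.count_pos_iff.mp (by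
    rw [List.count_append, List.count_cons_self, List.count_eq_zero.mpr hx] at h; omega)
  obtain ⟨y, z, rfl, hy⟩ := List.eq_append_cons_of_mem this
  exact ⟨x, y, z, rfl, hy⟩

theorem eq_of_dvd_of_dvd_add_of_not_dvd {d k L : ℕ} (hL : 0 < L) (hk : d ∣ k) (hLk : d ∣ L + k)
    (hbetween : ∀ i, 0 < i → i < L → ¬ d ∣ i + k) : L = d := by
  have hdL : d ∣ L := (Nat.dvd_add_left hk).mp hLk
  rcases (Nat.le_of_dvd hL hdL).lt_or_eq with hlt | heq
  · exact absurd (Nat.dvd_add_self_left.mpr hk) (hbetween d (Nat.pos_of_dvd_of_pos hdL hL) hlt)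
  · exact heq.symm

def blockWord (p n : ℕ) : List AB :=
  (List.replicate n (AB.b :: List.replicate p AB.a)).flatten

theorem length_blockWord (p n : ℕ) : (blockWord p n).length = n * (p + 1) := by
  simp [blockWord]

theorem count_b_blockWord (p n : ℕ) : (blockWord p n).count AB.b = n := by
  simp [blockWord, List.count_flatten, List.count_replicate]

theorem eq_b_iff_dvd_of_getElem?_blockWord {p n j : ℕ} {c : AB}
    (h : (blockWord p n)[j]? = some c) : c = AB.b ↔ (p + 1) ∣ j := by
  induction n generalizing j with
  | zero => simp [blockWord] at h
  | succ n ih =>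
    have hsucc : blockWord p (n + 1) = (AB.b :: List.replicate p AB.a) ++ blockWord p n := by
      simp [blockWord, List.replicate_succ]
    rw [hsucc] at h
    rcases lt_or_ge j (p + 1) with hj | hj
    · rw [List.getElem?_append_left (by simpa using hj)] at h
      rcases j with _ | j
      · simp_all
      · have hc : c = AB.a := by
          simp only [List.getElem?_cons_succ, List.getElem?_replicate,
            Option.ite_none_right_eq_some, Option.some.injEq] at h
          exact h.2.symm
        have hndvd : ¬ (p + 1) ∣ j + 1 := Nat.not_dvd_of_pos_of_lt (by omega) hj
        simp [hc, hndvd]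
    · obtain ⟨j, rfl⟩ := Nat.exists_eq_add_of_le hj
      rw [List.getElem?_append_right (by simp)] at h
      simpa [Nat.dvd_add_self_left] using ih h

theorem length_eq_of_infix_blockWord {p n : ℕ} {y : List AB} (hy : AB.b ∉ y)
    (h : AB.b :: (y ++ [AB.b]) <:+: blockWord p n) : y.length = p := by
  obtain ⟨k, -, hk⟩ := List.infix_iff_getElem?.mp h
  have hdvd : ∀ i (hi : i < y.length + 2),
      (AB.b :: (y ++ [AB.b]))[i]'(by simp; omega) = AB.b ↔ (p + 1) ∣ i + k :=
    fun i hi => eq_b_iff_dvd_of_getElem?_blockWord (hk i _)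
  have hgap := eq_of_dvd_of_dvd_add_of_not_dvd (Nat.succ_pos y.length)
    (by simpa using (hdvd 0 (by omega)).mp rfl) ((hdvd (y.length + 1) (by omega)).mp (by simp))
    (fun i hi0 hiL hdiv => by
      obtain ⟨i, rfl⟩ := Nat.exists_eq_add_of_lt hi0
      have hyi := (hdvd (i + 1) (by omega)).mpr (by simpa using hdiv)
      simp only [List.getElem_cons_succ,
        List.getElem_append_left (show i < y.length by omega)] at hyi
      exact hy (hyi ▸ List.getElem_mem _))
  omega

theorem eq_of_infix_blockWord {p q n m : ℕ} {u : List AB} (hcount : 2 ≤ u.count AB.b)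
    (hp : u <:+: blockWord p n) (hq : u <:+: blockWord q m) : p = q := by
  obtain ⟨x, y, z, rfl, hy⟩ := exists_append_cons_append_cons_of_two_le_count hcount
  have hbab : AB.b :: (y ++ [AB.b]) <:+: x ++ AB.b :: (y ++ AB.b :: z) := ⟨x, z, by simp⟩
  rw [← length_eq_of_infix_blockWord hy (hbab.trans hp),
    length_eq_of_infix_blockWord hy (hbab.trans hq)]

theorem mem_Klang {φ : ℕ → ℕ} {U : Set ℕ} {w : List AB} :
    w ∈ Klang φ U ↔ ∃ m ∈ U, w = blockWord (φ m) m :=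
  Iff.rfl

theorem exists_gt_least_in_fiber {φ : ℕ → ℕ} (hφ : Tendsto φ atTop atTop) {U : Set ℕ}
    (hU : U.Infinite) (k : ℕ) : ∃ n ∈ U, k < n ∧ ∀ m ∈ U, φ m = φ n → n ≤ m := by
  classical
  obtain ⟨N, hN⟩ := eventually_atTop.mp (hφ.eventually_gt_atTop ((Finset.range (k + 1)).sup φ))
  obtain ⟨n₁, hn₁U, hn₁N⟩ := hU.exists_gt N
  have hex : ∃ n, n ∈ U ∧ φ n = φ n₁ := ⟨n₁, hn₁U, rfl⟩
  obtain ⟨hnU, hφn⟩ := Nat.find_spec hex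
  refine ⟨Nat.find hex, hnU, ?_, fun m hmU hm => Nat.find_min' hex ⟨hmU, hm.trans hφn⟩⟩
  by_contra! hle
  have := Finset.le_sup (f := φ) (Finset.mem_range.mpr (Nat.lt_add_one_of_le hle))
  have := hN n₁ hn₁N.le
  omega

theorem exists_lt_of_shrinking_factorization {φ : ℕ → ℕ} {U : Set ℕ} {p n : ℕ}
    {ws : List (List AB)} (hw : blockWord p n = ws.flatten) (hlen : ws.length < n)
    (hne : ∀ wi ∈ ws, wi ≠ [])
    (hS : ∀ i < ws.length, ∃ S : Finset ℕ, i ∈ S ∧ S ⊆ Finset.range ws.length ∧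
      S ≠ Finset.range ws.length ∧ subproduct ws S ∈ Klang φ U) :
    ∃ m ∈ U, φ m = p ∧ m < n := by
  obtain ⟨wi, hwi, hcount⟩ :=
    exists_two_le_count_of_length_lt (a := AB.b) (by rwa [← hw, count_b_blockWord])
  obtain ⟨i, hi, rfl⟩ := List.mem_iff_getElem.mp hwi
  obtain ⟨S, hiS, hSsub, hSne, hmem⟩ := hS i hi
  obtain ⟨m, hmU, hm⟩ := mem_Klang.mp hmem
  have hφm : φ m = p := (eq_of_infix_blockWord hcount (hw ▸ List.infix_of_mem_flatten hwi)
    (hm ▸ infix_subproduct hi hiS)).symm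
  obtain ⟨j, hj, hjS⟩ := Finset.exists_of_ssubset (hSsub.ssubset_of_ne hSne)
  have hlt :=
    length_subproduct_lt hSsub (Finset.mem_range.mp hj) hjS (hne _ (List.getElem_mem _))
  rw [hm, ← hw, length_blockWord, length_blockWord, hφm] at hlt
  exact ⟨m, hmU, hφm, Nat.lt_of_mul_lt_mul_right hlt⟩

theorem stmt_12_general (φ : ℕ → ℕ)
    (hφ : Filter.Tendsto φ Filter.atTop Filter.atTop)
    (U : Set ℕ) (hU : U.Infinite) :
    ¬ ShrinkOne (Klang φ U) := by
  rintro ⟨k, -, hk⟩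
  obtain ⟨n, hnU, hkn, hleast⟩ := exists_gt_least_in_fiber hφ hU k
  have hlen : k ≤ (blockWord (φ n) n).length := by
    rw [length_blockWord]
    nlinarith
  obtain ⟨ws, hw, -, hws, hne, hS⟩ := hk _ (mem_Klang.mpr ⟨n, hnU, rfl⟩) hlen
  obtain ⟨m, hmU, hφm, hmn⟩ := exists_lt_of_shrinking_factorization hw (by omega) hne hS
  exact (hleast m hmU hφm).not_gt hmn

/-- for every `φ : ℕ⁺ → ℕ⁺` tending to infinity and every infinite
`U ⊆ ℕ`, the language `K(φ,U)` fails the conclusion of the Shrinking Lemma for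
`m = 1`; hence (by the Shrinking Lemma) `K(φ,U)` is not indexed. -/
theorem stmt_12 (φ : ℕ → ℕ) (hpos : ∀ n, 0 < φ n)
    (hφ : Filter.Tendsto φ Filter.atTop Filter.atTop)
    (U : Set ℕ) (hU : U.Infinite) :
    ¬ ShrinkOne (Klang φ U) :=
  stmt_12_general φ hφ U hU
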